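/- Let n ≥ 1. For all permutations β₁,…,β₉ of {1,…,2n}, the lattice functional F(β) := 4|γ_{n,n}⁻¹β₅| + |γ_{n,n}⁻¹β₄| + |γ_{n,n}⁻¹β₆| + 2(|β₁| + |β₃| + |β₄| + |β₆| + |β₇| + |β₉|) + 3(|β₂| + |β₈|) + Σ_{(i,j)∈E} |β_i⁻¹β_j|, where E = {(1,2),(2,3),(4,5),(5,6),(7,8),(8,9),(1,4),(4,7),(2,5),(5,8),(3,6),(6,9)}, satisfies F(β) ≥ 6(2n − 2). -/

import Mathlib

/-!
For a permutation `σ` of a finite set of size `m`, `cycleCount σ` is the number of cycles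
(fixed points count as cycles) and `permLen σ = m - cycleCount σ` (the minimal number of
transpositions needed to write `σ`).  We model `{1,…,2n}` as `Fin n ⊕ Fin n`, the first
summand being `{1,…,n}` and the second `{n+1,…,2n}`.  `gammaNN n` is the product of the
two `n`-cycles `(1,2,…,n)` and `(n+1,…,2n)`.
-/

/-- The number of cycles of a permutation, where fixed points count as cycles. -/
noncomputable def cycleCount {α : Type*} [Fintype α] [DecidableEq α]
    (σ : Equiv.Perm α) : ℕ :=
  Multiset.card σ.cycleType + (Fintype.card α - σ.support.card)

/-- `|σ| = m - #(σ)`, the minimal number of transpositions whose product is `σ`. -/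
noncomputable def permLen {α : Type*} [Fintype α] [DecidableEq α]
    (σ : Equiv.Perm α) : ℕ :=
  Fintype.card α - cycleCount σ

/-- `γ_{n,n}`: the product of the two `n`-cycles `(1,…,n)` and `(n+1,…,2n)`. -/
def gammaNN (n : ℕ) : Equiv.Perm (Fin n ⊕ Fin n) :=
  Equiv.sumCongr (finRotate n) (finRotate n)

/-- A permutation of `{1,…,2n}` is connected if some cycle of it contains both an
element of `{1,…,n}` and an element of `{n+1,…,2n}`. -/
def IsConnectedPerm {n : ℕ} (β : Equiv.Perm (Fin n ⊕ Fin n)) : Prop :=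
  ∃ a b : Fin n, β.SameCycle (Sum.inl a) (Sum.inr b)

/-- The lattice functional for the 3×3 grid:
`F(β) = 4|γ_{n,n}⁻¹β₅| + |γ_{n,n}⁻¹β₄| + |γ_{n,n}⁻¹β₆|
  + 2(|β₁| + |β₃| + |β₄| + |β₆| + |β₇| + |β₉|) + 3(|β₂| + |β₈|)
  + Σ_{(i,j)∈E} |βᵢ⁻¹βⱼ|` over the twelve grid edges `E`. -/
noncomputable def latticeF {n : ℕ}
    (b₁ b₂ b₃ b₄ b₅ b₆ b₇ b₈ b₉ : Equiv.Perm (Fin n ⊕ Fin n)) : ℕ :=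
  4 * permLen ((gammaNN n)⁻¹ * b₅) + permLen ((gammaNN n)⁻¹ * b₄)
    + permLen ((gammaNN n)⁻¹ * b₆)
    + 2 * (permLen b₁ + permLen b₃ + permLen b₄ + permLen b₆ + permLen b₇ + permLen b₉)
    + 3 * (permLen b₂ + permLen b₈)
    + (permLen (b₁⁻¹ * b₂) + permLen (b₂⁻¹ * b₃) + permLen (b₄⁻¹ * b₅)
      + permLen (b₅⁻¹ * b₆) + permLen (b₇⁻¹ * b₈) + permLen (b₈⁻¹ * b₉)
      + permLen (b₁⁻¹ * b₄) + permLen (b₄⁻¹ * b₇) + permLen (b₂⁻¹ * b₅)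
      + permLen (b₅⁻¹ * b₈) + permLen (b₃⁻¹ * b₆) + permLen (b₆⁻¹ * b₉))


/-! Multiplying a permutation by a transposition merges two cycles or splits one, so `permLen`
changes by at most one; since every permutation is a product of `permLen σ` transpositions,
`permLen` is subadditive, i.e. `(σ, τ) ↦ |σ⁻¹τ|` is a metric on permutations. As
`|γ_{n,n}| = 2n - 2`, every path `1 → βᵢ → ⋯ → γ_{n,n}` through the grid has length at least
`2n - 2`, and `F(β)` dominates the total length of the six paths `1 → β₁ → β₄ → γ`,
`1 → β₃ → β₆ → γ`, `1 → β₂ → β₅ → γ`, `1 → β₈ → β₅ → γ`, `1 → β₇ → β₄ → β₅ → γ` and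
`1 → β₉ → β₆ → β₅ → γ`. -/

namespace Equiv.Perm

variable {α : Type*} [Fintype α] [DecidableEq α]

theorem card_cycleType_le_card_support (σ : Perm α) :
    Multiset.card σ.cycleType ≤ σ.support.card := by
  rw [← sum_cycleType]
  simpa using Multiset.card_nsmul_le_sum fun k hk => (two_le_of_mem_cycleType hk).trans' one_le_two

theorem permLen_eq_card_support_sub (σ : Perm α) :
    permLen σ = σ.support.card - Multiset.card σ.cycleType := by
  have := σ.card_cycleType_le_card_support
  have := σ.support.card_le_univ
  unfold permLen cycleCount
  omega

@[simp] theorem permLen_one : permLen (1 : Perm α) = 0 := by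
  simp [permLen_eq_card_support_sub]

@[simp] theorem permLen_inv (σ : Perm α) : permLen σ⁻¹ = permLen σ := by
  simp [permLen_eq_card_support_sub]

theorem permLen_inv_mul_comm (σ τ : Perm α) : permLen (σ⁻¹ * τ) = permLen (τ⁻¹ * σ) := by
  rw [← permLen_inv, mul_inv_rev, inv_inv]

theorem Disjoint.permLen_mul {σ τ : Perm α} (h : Disjoint σ τ) :
    permLen (σ * τ) = permLen σ + permLen τ := by
  have := σ.card_cycleType_le_card_support
  have := τ.card_cycleType_le_card_support
  simp only [permLen_eq_card_support_sub, h.cycleType_mul, h.card_support_mul,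
    Multiset.card_add]
  omega

theorem IsCycle.permLen_eq {σ : Perm α} (h : σ.IsCycle) : permLen σ = σ.support.card - 1 := by
  simp [permLen_eq_card_support_sub, h.cycleType]

theorem permLen_extendDomain {β : Type*} [Fintype β] [DecidableEq β] {p : β → Prop}
    [DecidablePred p] (f : α ≃ Subtype p) (σ : Perm α) :
    permLen (σ.extendDomain f) = permLen σ := by
  simp only [permLen_eq_card_support_sub, cycleType_extendDomain, card_support_extend_domain]

theorem permLen_sumCongr {β : Type*} [Fintype β] [DecidableEq β] (σ : Perm α) (τ : Perm β) :
    permLen (sumCongr σ τ) = permLen σ + permLen τ := by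
  have hσ : sumCongr σ 1 = σ.extendDomain (sumIsLeft (β := β)).symm := by
    ext (a | b)
    · exact (σ.extendDomain_apply_image sumIsLeft.symm a).symm
    · simp [extendDomain_apply_not_subtype]
  have hτ : sumCongr 1 τ = τ.extendDomain (sumIsRight (α := α)).symm := by
    ext (a | b)
    · simp [extendDomain_apply_not_subtype]
    · exact (τ.extendDomain_apply_image sumIsRight.symm b).symm
  have hdisj : Disjoint (sumCongr σ 1) (sumCongr 1 τ) := by
    rintro (a | b) <;> simp
  rw [show sumCongr σ τ = sumCongr σ 1 * sumCongr 1 τ by rw [sumCongr_mul, mul_one, one_mul],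
    hdisj.permLen_mul, hσ, hτ, permLen_extendDomain, permLen_extendDomain]

theorem permLen_finRotate (n : ℕ) : permLen (finRotate n) = n - 1 := by
  match n with
  | 0 | 1 => exact permLen_one
  | n + 2 => simp [(isCycle_finRotate (n := n)).permLen_eq, support_finRotate]

theorem IsCycle.permLen_swap_mul {c : Perm α} (hc : c.IsCycle) {x : α} (hx : c x ≠ x) :
    permLen (swap x (c x) * c) + 1 = permLen c := by
  by_cases hcc : c (c x) = x
  · have hswap : c = swap x (c x) := hc.eq_swap_of_apply_apply_eq_self hx hcc
    rw [hc.permLen_eq, hswap, swap_apply_left, swap_mul_self, permLen_one,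
      card_support_swap hx.symm]
  · have hxc : x ∈ c.support := mem_support.2 hx
    have := hc.two_le_card_support
    rw [(hc.swap_mul hx hcc).permLen_eq, support_swap_mul_eq c x hcc, hc.permLen_eq,
      Finset.card_sdiff_of_subset (Finset.singleton_subset_iff.2 hxc), Finset.card_singleton]
    omega

theorem permLen_swap_mul_self_apply {σ : Perm α} {x : α} (hx : σ x ≠ x) :
    permLen (swap x (σ x) * σ) + 1 = permLen σ := by
  set c := σ.cycleOf x
  set ρ := σ * c⁻¹
  have hcx : c x = σ x := cycleOf_apply_self σ x
  have hρc : Disjoint ρ c := disjoint_mul_inv_of_mem_cycleFactorsFinset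
    (cycleOf_mem_cycleFactorsFinset_iff.2 (mem_support.2 hx))
  have hxc : x ∈ c.support := mem_support.2 (hcx ▸ hx)
  have hσxc : σ x ∈ c.support := hcx ▸ apply_mem_support.2 hxc
  have hρswap : Disjoint ρ (swap x (σ x)) := by
    intro y
    by_cases hy : y = x ∨ y = σ x
    · left
      rcases hy with rfl | rfl
      exacts [notMem_support.1 (hρc.symm.mem_imp hxc), notMem_support.1 (hρc.symm.mem_imp hσxc)]
    · push Not at hy
      exact Or.inr (swap_apply_of_ne_of_ne hy.1 hy.2)
  have hσ : σ = ρ * c := by simp [ρ]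
  have hswapσ : swap x (σ x) * σ = ρ * (swap x (σ x) * c) := by
    rw [← mul_assoc, hρswap.commute.eq, mul_assoc, ← hσ]
  rw [hswapσ, (hρswap.mul_right hρc).permLen_mul, add_assoc, ← hcx,
    (isCycle_cycleOf σ hx).permLen_swap_mul (hcx ▸ hx), ← hρc.permLen_mul, ← hσ]

theorem permLen_swap_mul_of_apply_eq_self {σ : Perm α} {a b : α} (ha : σ a = a) (hab : a ≠ b) :
    permLen (swap a b * σ) = permLen σ + 1 := by
  have hτa : (swap a b * σ) a = b := by simp [ha]
  have := permLen_swap_mul_self_apply (hτa.trans_ne hab.symm)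
  rwa [hτa, swap_mul_self_mul, eq_comm] at this

theorem permLen_swap_mul_le (σ : Perm α) (a b : α) :
    permLen (swap a b * σ) ≤ permLen σ + 1 := by
  induction h : permLen σ using Nat.strong_induction_on generalizing σ a b with
  | _ k ih =>
  subst h
  by_cases hab : a = b
  · rw [hab, swap_self, ← one_def, one_mul]
    omega
  by_cases ha : σ a = a
  · exact (permLen_swap_mul_of_apply_eq_self ha hab).le
  have hdec := permLen_swap_mul_self_apply ha
  obtain ⟨c, hc⟩ : ∃ c, σ a = c := ⟨_, rfl⟩
  rw [hc] at ha hdec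
  by_cases hcb : c = b
  · subst hcb
    omega
  -- `swap a b = swap a c * swap c b * swap a c`, and `swap c b * (swap a c * σ)` fixes `a`.
  have hfix : (swap c b * (swap a c * σ)) a = a := by
    simp [hc, swap_apply_of_ne_of_ne (Ne.symm ha) hab]
  have hsplit : swap a b * σ = swap a c * (swap c b * (swap a c * σ)) := by
    have : swap a c * swap c b = swap a b * swap a c := by
      rw [mul_swap_eq_swap_mul, swap_apply_right,
        swap_apply_of_ne_of_ne (Ne.symm hab) (Ne.symm hcb)]
    rw [← mul_assoc, this, mul_assoc, swap_mul_self_mul]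
  rw [hsplit, permLen_swap_mul_of_apply_eq_self hfix (Ne.symm ha)]
  have := ih _ (by omega) (swap a c * σ) c b rfl
  omega

theorem permLen_mul_le (σ τ : Perm α) : permLen (σ * τ) ≤ permLen σ + permLen τ := by
  induction h : permLen σ using Nat.strong_induction_on generalizing σ with
  | _ k ih =>
  subst h
  by_cases hσ : σ = 1
  · simp [hσ]
  obtain ⟨x, hx⟩ : ∃ x, σ x ≠ x := by
    by_contra! hfix
    exact hσ (ext hfix)
  have hdec := permLen_swap_mul_self_apply hx
  have hih := ih _ (by omega) (swap x (σ x) * σ) rfl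
  have hswap := permLen_swap_mul_le (swap x (σ x) * (σ * τ)) x (σ x)
  rw [mul_assoc] at hih
  rw [swap_mul_self_mul] at hswap
  omega

theorem permLen_list_prod_le (l : List (Perm α)) : permLen l.prod ≤ (l.map permLen).sum := by
  induction l with
  | nil => simp
  | cons σ l ih =>
    rw [List.prod_cons, List.map_cons, List.sum_cons]
    exact (permLen_mul_le σ l.prod).trans (Nat.add_le_add_left ih _)

end Equiv.Perm

open Equiv Perm

theorem permLen_gammaNN (n : ℕ) : permLen (gammaNN n) = 2 * n - 2 := by
  rw [gammaNN, permLen_sumCongr, permLen_finRotate]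
  omega

theorem latticeF_ge_general (n : ℕ)
    (b₁ b₂ b₃ b₄ b₅ b₆ b₇ b₈ b₉ : Equiv.Perm (Fin n ⊕ Fin n)) :
    6 * (2 * n - 2) ≤ latticeF b₁ b₂ b₃ b₄ b₅ b₆ b₇ b₈ b₉ := by
  have path (l : List (Perm (Fin n ⊕ Fin n))) (hl : l.prod = gammaNN n) :
      2 * n - 2 ≤ (l.map permLen).sum :=
    permLen_gammaNN n ▸ hl ▸ permLen_list_prod_le l
  have p₁ := path [b₁, b₁⁻¹ * b₄, b₄⁻¹ * gammaNN n] (by simp [← mul_assoc])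
  have p₂ := path [b₂, b₂⁻¹ * b₅, b₅⁻¹ * gammaNN n] (by simp [← mul_assoc])
  have p₃ := path [b₃, b₃⁻¹ * b₆, b₆⁻¹ * gammaNN n] (by simp [← mul_assoc])
  have p₇ := path [b₇, b₇⁻¹ * b₄, b₄⁻¹ * b₅, b₅⁻¹ * gammaNN n] (by simp [← mul_assoc])
  have p₈ := path [b₈, b₈⁻¹ * b₅, b₅⁻¹ * gammaNN n] (by simp [← mul_assoc])
  have p₉ := path [b₉, b₉⁻¹ * b₆, b₆⁻¹ * b₅, b₅⁻¹ * gammaNN n] (by simp [← mul_assoc])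
  simp only [List.map_cons, List.map_nil, List.sum_cons, List.sum_nil] at p₁ p₂ p₃ p₇ p₈ p₉
  rw [latticeF, permLen_inv_mul_comm (gammaNN n) b₄, permLen_inv_mul_comm (gammaNN n) b₅,
    permLen_inv_mul_comm (gammaNN n) b₆, permLen_inv_mul_comm b₄ b₇,
    permLen_inv_mul_comm b₅ b₆, permLen_inv_mul_comm b₅ b₈, permLen_inv_mul_comm b₆ b₉]
  omega

theorem latticeF_ge (n : ℕ) (hn : 1 ≤ n)
    (b₁ b₂ b₃ b₄ b₅ b₆ b₇ b₈ b₉ : Equiv.Perm (Fin n ⊕ Fin n)) :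
    6 * (2 * n - 2) ≤ latticeF b₁ b₂ b₃ b₄ b₅ b₆ b₇ b₈ b₉ :=
  latticeF_ge_general n b₁ b₂ b₃ b₄ b₅ b₆ b₇ b₈ b₉
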